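/- arXiv:2605.01858 — 7 statements merged into one kernel-verified Lean document; each statement's English description precedes it below -/
import Mathlib

section
/- Let d be a natural number, θ : Fin d → ℝ a family of frequencies, and for x : Fin d → ℂ and m : ℝ define the rotary position embedding f(x, m) componentwise by (f(x, m))_t = exp(m·θ_t·I)·x_t. Then for all q, k : Fin d → ℂ and all m, n : ℝ, the real inner product ∑_t Re(conj((f(q, m))_t) · (f(k, n))_t) equals ∑_t Re(conj(q_t) · (f(k, n − m))_t). (RoPE relative-position property: the position-encoded query–key inner product depends only on the relative position n−m.) -/
open Complex

/-- Rotary position embedding: at position `m`, the `t`-th 2D block (a complex number)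
is multiplied by `exp (m * θ t * I)`. -/
noncomputable def rope (d : ℕ) (θ : Fin d → ℝ) (x : Fin d → ℂ) (m : ℝ) : Fin d → ℂ :=
  fun t => Complex.exp (m * θ t * Complex.I) * x t

/-- RoPE relative-position property: the position-encoded query–key real inner product
depends only on the relative position `n - m`. -/
theorem rope_relative (d : ℕ) (θ : Fin d → ℝ) (q k : Fin d → ℂ) (m n : ℝ) :
    ∑ t, ((starRingEnd ℂ) (rope d θ q m t) * rope d θ k n t).re =
    ∑ t, ((starRingEnd ℂ) (q t) * rope d θ k (n - m) t).re := by
  refine Finset.sum_congr rfl fun t _ => ?_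
  simp only [rope, map_mul, ← Complex.exp_conj, map_mul, Complex.conj_I, Complex.conj_ofReal]
  rw [show ((n - m : ℝ) : ℂ) * θ t * Complex.I = n * θ t * Complex.I + (m : ℂ) * θ t * (-Complex.I) by push_cast; ring, Complex.exp_add]
  ring_nf
end

section
/- Let d be a natural number, θ : Fin d → ℝ, and f the rotary position embedding defined by (f(x, m))_t = exp(m·θ_t·I)·x_t for x : Fin d → ℂ. Then for all q, k : Fin d → ℂ and all m, n, s : ℝ, ∑_t Re(conj((f(q, m+s))_t) · (f(k, n+s))_t) = ∑_t Re(conj((f(q, m))_t) · (f(k, n))_t). (Shift invariance: shifting all position IDs by a common offset s leaves every RoPE query–key inner product unchanged.) -/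
open Complex

/-- Shift invariance: shifting all position IDs by a common offset `s` leaves every
RoPE query–key real inner product unchanged. -/
theorem rope_shift_invariant (d : ℕ) (θ : Fin d → ℝ) (q k : Fin d → ℂ) (m n s : ℝ) :
    ∑ t, ((starRingEnd ℂ) (rope d θ q (m + s) t) * rope d θ k (n + s) t).re =
    ∑ t, ((starRingEnd ℂ) (rope d θ q m t) * rope d θ k n t).re := by
  apply Finset.sum_congr rfl
  intro t _
  have key : ∀ a : ℝ, (starRingEnd ℂ) (rope d θ q a t) * rope d θ k (a + (n - m)) t
      = Complex.exp ((n - m) * θ t * Complex.I) * ((starRingEnd ℂ) (q t) * k t) := by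
    intro a
    simp only [rope, map_mul, ← Complex.exp_conj, Complex.conj_ofReal, Complex.conj_I]
    rw [show Complex.exp (↑a * ↑(θ t) * (-Complex.I)) * (starRingEnd ℂ) (q t) *
        (Complex.exp (↑(a + (n - m)) * ↑(θ t) * Complex.I) * k t)
        = Complex.exp (↑a * ↑(θ t) * (-Complex.I)) * Complex.exp (↑(a + (n - m)) * ↑(θ t) * Complex.I)
          * ((starRingEnd ℂ) (q t) * k t) by ring]
    rw [← Complex.exp_add]
    congr 2
    push_cast
    ring
  have h1 := key (m + s)
  have h2 := key m
  rw [show m + s + (n - m) = n + s by ring] at h1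
  rw [show m + (n - m) = n by ring] at h2
  rw [h1, h2]
end

section
/- Let d be a natural number, θ : Fin d → ℝ, and f the rotary position embedding defined by (f(x, m))_t = exp(m·θ_t·I)·x_t for x : Fin d → ℂ. Then for all q, k : Fin d → ℂ and all m, n : ℝ, ∑_t Re(conj((f(q, m))_t)·(f(k, n))_t) = Re(∑_t conj(q_t)·k_t·exp((n−m)·θ_t·I)). (Existence of the relative form g: the RoPE query–key inner product equals a function g(q, k, n−m) of the raw query, the raw key, and the relative position only.) -/
open Complex

/-- Existence of the relative form `g`: the RoPE query–key real inner product equals a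
function of the raw query, the raw key, and the relative position `n − m` only. -/
theorem rope_relative_form (d : ℕ) (θ : Fin d → ℝ) (q k : Fin d → ℂ) (m n : ℝ) :
    ∑ t, ((starRingEnd ℂ) (rope d θ q m t) * rope d θ k n t).re =
    (∑ t, (starRingEnd ℂ) (q t) * k t * Complex.exp ((n - m) * θ t * Complex.I)).re := by
  rw [Complex.re_sum]
  refine Finset.sum_congr rfl fun t _ => ?_
  congr 1
  simp only [rope, map_mul, ← Complex.exp_conj, Complex.conj_I, Complex.conj_ofReal]
  rw [show ((n : ℂ) - m) * θ t * Complex.I = m * θ t * -Complex.I + n * θ t * Complex.I by ring,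
    Complex.exp_add]
  ring
end

section
/- Let d, N be natural numbers with N ≥ 1, θ : Fin d → ℝ, and f the rotary position embedding (f(x, m))_t = exp(m·θ_t·I)·x_t for x : Fin d → ℂ. Let q : Fin d → ℂ be a query vector, k : Fin N → (Fin d → ℂ) a family of key vectors, pos : Fin N → ℝ the key positions, pq : ℝ the query position, and D > 0 a scaling constant. Define the attention weights a(c)_j = exp(s(c)_j / √D) / ∑_{j'} exp(s(c)_{j'} / √D), where s(c)_j = ∑_t Re(conj((f(q, pq + c))_t)·(f(k_j, pos_j + c))_t). Then for every shift c : ℝ and every j : Fin N, a(c)_j = a(0)_j. (Softmax attention weights computed from RoPE-encoded queries and keys are invariant under a common shift of all position IDs.) -/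
open Complex

/-- Attention score under shift `c`: the RoPE real inner product of the query encoded at
position `pq + c` with the `j`-th key encoded at position `pos j + c`. -/
noncomputable def ropeScore (d N : ℕ) (θ : Fin d → ℝ) (q : Fin d → ℂ)
    (k : Fin N → Fin d → ℂ) (pos : Fin N → ℝ) (pq : ℝ) (c : ℝ) (j : Fin N) : ℝ :=
  ∑ t, ((starRingEnd ℂ) (rope d θ q (pq + c) t) * rope d θ (k j) (pos j + c) t).re

/-- Softmax attention weight of key `j` under shift `c`, with scores scaled by `√D`. -/
noncomputable def ropeAttnWeight (d N : ℕ) (θ : Fin d → ℝ) (q : Fin d → ℂ)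
    (k : Fin N → Fin d → ℂ) (pos : Fin N → ℝ) (pq : ℝ) (D : ℝ) (c : ℝ) (j : Fin N) : ℝ :=
  Real.exp (ropeScore d N θ q k pos pq c j / Real.sqrt D) /
    ∑ j', Real.exp (ropeScore d N θ q k pos pq c j' / Real.sqrt D)

lemma ropeScore_shift (d N : ℕ) (θ : Fin d → ℝ) (q : Fin d → ℂ)
    (k : Fin N → Fin d → ℂ) (pos : Fin N → ℝ) (pq : ℝ) (c : ℝ) (j : Fin N) :
    ropeScore d N θ q k pos pq c j = ropeScore d N θ q k pos pq 0 j := by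
  unfold ropeScore rope
  congr 1
  ext t
  have key : ∀ m1 m2 : ℝ,
      (starRingEnd ℂ) (Complex.exp (m1 * θ t * Complex.I) * q t) *
        (Complex.exp (m2 * θ t * Complex.I) * k j t)
      = Complex.exp (((m2 : ℂ) - m1) * θ t * Complex.I) *
          ((starRingEnd ℂ) (q t) * k j t) := by
    intro m1 m2
    rw [map_mul, ← Complex.exp_conj, mul_mul_mul_comm, ← Complex.exp_add]
    congr 2
    simp [Complex.ext_iff]
    ring
  rw [key, key]
  norm_num

/-- Softmax attention weights computed from RoPE-encoded queries and keys are invariant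
under a common shift of all position IDs. -/
theorem rope_attn_weight_shift_invariant (d N : ℕ) (hN : 1 ≤ N) (θ : Fin d → ℝ)
    (q : Fin d → ℂ) (k : Fin N → Fin d → ℂ) (pos : Fin N → ℝ) (pq : ℝ)
    (D : ℝ) (hD : 0 < D) (c : ℝ) (j : Fin N) :
    ropeAttnWeight d N θ q k pos pq D c j = ropeAttnWeight d N θ q k pos pq D 0 j := by
  unfold ropeAttnWeight
  simp only [ropeScore_shift]
end

section
/- Let d, N, V be natural numbers with N ≥ 1, θ : Fin d → ℝ, and f the rotary position embedding (f(x, m))_t = exp(m·θ_t·I)·x_t for x : Fin d → ℂ. Let q : Fin d → ℂ be a query, k : Fin N → (Fin d → ℂ) keys, v : Fin N → (Fin V → ℝ) values, pos : Fin N → ℝ key positions, pq : ℝ the query position, and D > 0. Define the attention output out(c) = ∑_j a(c)_j • v_j, where a(c)_j = exp(s(c)_j/√D)/∑_{j'} exp(s(c)_{j'}/√D) and s(c)_j = ∑_t Re(conj((f(q, pq + c))_t)·(f(k_j, pos_j + c))_t). Then out(c) = out(0) for every c : ℝ. (Single-layer form of Proposition 3.2: since values carry no positional information, the self-attention output under RoPE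 is identical whether positions are encoded with absolute IDs or with position IDs shifted by any common offset, as in position-agnostic encoding with relative-distance-preserving reassignment.) -/
open Complex

/-- Attention output under shift `c`: convex combination of the (position-free) values. -/
noncomputable def ropeAttnOut (d N V : ℕ) (θ : Fin d → ℝ) (q : Fin d → ℂ)
    (k : Fin N → Fin d → ℂ) (v : Fin N → Fin V → ℝ) (pos : Fin N → ℝ) (pq : ℝ)
    (D : ℝ) (c : ℝ) : Fin V → ℝ :=
  ∑ j, ropeAttnWeight d N θ q k pos pq D c j • v j

/-- Single-layer form of Proposition 3.2: since values carry no positional information,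
the self-attention output under RoPE is identical whether positions are encoded with
absolute IDs or with position IDs shifted by any common offset. -/
theorem rope_attn_out_shift_invariant (d N V : ℕ) (hN : 1 ≤ N) (θ : Fin d → ℝ)
    (q : Fin d → ℂ) (k : Fin N → Fin d → ℂ) (v : Fin N → Fin V → ℝ)
    (pos : Fin N → ℝ) (pq : ℝ) (D : ℝ) (hD : 0 < D) (c : ℝ) :
    ropeAttnOut d N V θ q k v pos pq D c = ropeAttnOut d N V θ q k v pos pq D 0 := by
  have hscore : ∀ j, ropeScore d N θ q k pos pq c j = ropeScore d N θ q k pos pq 0 j := by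
    intro j
    unfold ropeScore rope
    refine Finset.sum_congr rfl fun t _ => ?_
    congr 1
    have key : ∀ a b : ℝ, (starRingEnd ℂ) (Complex.exp (a * θ t * Complex.I)) *
        Complex.exp (b * θ t * Complex.I) = Complex.exp ((b - a) * θ t * Complex.I) := by
      intro a b
      rw [← Complex.exp_conj, ← Complex.exp_add]
      congr 1
      simp [Complex.conj_I, Complex.conj_ofReal]
      push_cast
      ring
    have h1 := key (pq + c) (pos j + c)
    have h2 := key pq (pos j)
    calc (starRingEnd ℂ) (Complex.exp (↑(pq + c) * ↑(θ t) * Complex.I) * q t) *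
          (Complex.exp (↑(pos j + c) * ↑(θ t) * Complex.I) * k j t)
        = ((starRingEnd ℂ) (Complex.exp (↑(pq + c) * ↑(θ t) * Complex.I)) *
            Complex.exp (↑(pos j + c) * ↑(θ t) * Complex.I)) *
            ((starRingEnd ℂ) (q t) * k j t) := by rw [map_mul]; ring
      _ = Complex.exp ((↑(pos j + c) - ↑(pq + c)) * ↑(θ t) * Complex.I) *
            ((starRingEnd ℂ) (q t) * k j t) := by rw [h1]
      _ = Complex.exp ((↑(pos j) - ↑pq) * ↑(θ t) * Complex.I) *
            ((starRingEnd ℂ) (q t) * k j t) := by push_cast; ring_nf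
      _ = ((starRingEnd ℂ) (Complex.exp (↑pq * ↑(θ t) * Complex.I)) *
            Complex.exp (↑(pos j) * ↑(θ t) * Complex.I)) *
            ((starRingEnd ℂ) (q t) * k j t) := by rw [h2]
      _ = (starRingEnd ℂ) (Complex.exp (↑(pq + 0) * ↑(θ t) * Complex.I) * q t) *
          (Complex.exp (↑(pos j + 0) * ↑(θ t) * Complex.I) * k j t) := by
            rw [map_mul]; push_cast; ring_nf
  have hw : ∀ j, ropeAttnWeight d N θ q k pos pq D c j = ropeAttnWeight d N θ q k pos pq D 0 j := by
    intro j
    unfold ropeAttnWeight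
    simp only [hscore]
  unfold ropeAttnOut
  exact Finset.sum_congr rfl fun j _ => by rw [hw]
end

section
/- Let d, N, V be natural numbers with N ≥ 1, θ : Fin d → ℝ, and f the rotary position embedding (f(x, m))_t = exp(m·θ_t·I)·x_t for x : Fin d → ℂ. Let q : Fin d → ℂ, k : Fin N → (Fin d → ℂ), v : Fin N → (Fin V → ℝ), pos : Fin N → ℤ, pq : ℤ, and D > 0, and suppose p : ℤ → ℤ satisfies p(i) − p(j) = i − j for all i, j : ℤ. Then the attention weights and attention output computed with query position p(pq) and key positions p(pos_j) equal those computed with positions pq and pos_j, where the scores are s_j = ∑_t Re(conj((f(q, ·))_t)·(f(k_j, ·))_t)/√D, weights are the softmax of s, and the output is ∑_j a_j • v_j. (Proposition 3.2 for a self-attention layer: position-agnostic encoding with any relative-distance-preserving reassignment of integer position IDs produces outputs identical to standard absolute positional encoding.) -/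
open Complex

/-- Scaled attention score with integer positions: query at position `pq`, `j`-th key at
position `pos j` (both cast to ℝ), scaled by `√D`. -/
noncomputable def ropeScoreZ (d N : ℕ) (θ : Fin d → ℝ) (q : Fin d → ℂ)
    (k : Fin N → Fin d → ℂ) (pos : Fin N → ℤ) (pq : ℤ) (D : ℝ) (j : Fin N) : ℝ :=
  (∑ t, ((starRingEnd ℂ) (rope d θ q (pq : ℝ) t) *
      rope d θ (k j) ((pos j : ℤ) : ℝ) t).re) / Real.sqrt D

/-- Softmax attention weight of key `j`. -/
noncomputable def ropeAttnWeightZ (d N : ℕ) (θ : Fin d → ℝ) (q : Fin d → ℂ)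
    (k : Fin N → Fin d → ℂ) (pos : Fin N → ℤ) (pq : ℤ) (D : ℝ) (j : Fin N) : ℝ :=
  Real.exp (ropeScoreZ d N θ q k pos pq D j) /
    ∑ j', Real.exp (ropeScoreZ d N θ q k pos pq D j')

/-- Attention output: convex combination of the (position-free) value vectors. -/
noncomputable def ropeAttnOutZ (d N V : ℕ) (θ : Fin d → ℝ) (q : Fin d → ℂ)
    (k : Fin N → Fin d → ℂ) (v : Fin N → Fin V → ℝ) (pos : Fin N → ℤ) (pq : ℤ)
    (D : ℝ) : Fin V → ℝ :=
  ∑ j, ropeAttnWeightZ d N θ q k pos pq D j • v j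

/-- Proposition 3.2 for a self-attention layer: position-agnostic encoding with any
relative-distance-preserving reassignment `p` of integer position IDs produces attention
weights and outputs identical to standard absolute positional encoding. -/
theorem rope_attn_reassignment_invariant (d N V : ℕ) (hN : 1 ≤ N) (θ : Fin d → ℝ)
    (q : Fin d → ℂ) (k : Fin N → Fin d → ℂ) (v : Fin N → Fin V → ℝ)
    (pos : Fin N → ℤ) (pq : ℤ) (D : ℝ) (hD : 0 < D)
    (p : ℤ → ℤ) (hp : ∀ i j : ℤ, p i - p j = i - j) :
    (∀ j : Fin N, ropeAttnWeightZ d N θ q k (fun j' => p (pos j')) (p pq) D j =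
        ropeAttnWeightZ d N θ q k pos pq D j) ∧
    ropeAttnOutZ d N V θ q k v (fun j' => p (pos j')) (p pq) D =
      ropeAttnOutZ d N V θ q k v pos pq D := by
  have hscore : ∀ j, ropeScoreZ d N θ q k (fun j' => p (pos j')) (p pq) D j =
      ropeScoreZ d N θ q k pos pq D j := by
    intro j
    unfold ropeScoreZ
    congr 1
    apply Finset.sum_congr rfl
    intro t _
    have key : ∀ m n : ℝ, ((starRingEnd ℂ) (rope d θ q m t) * rope d θ (k j) n t) =
        Complex.exp (((n - m : ℝ) * θ t) * Complex.I) * ((starRingEnd ℂ) (q t) * k j t) := by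
      intro m n
      simp only [rope, map_mul, ← Complex.exp_conj, map_mul, Complex.conj_I,
        Complex.conj_ofReal]
      have he : Complex.exp ((m : ℂ) * (θ t : ℂ) * -Complex.I) *
          Complex.exp ((n : ℂ) * (θ t : ℂ) * Complex.I) =
          Complex.exp (((n - m : ℝ) : ℂ) * (θ t : ℂ) * Complex.I) := by
        rw [← Complex.exp_add]; congr 1; push_cast; ring
      rw [← he]; ring
    have hdiff : ((p (pos j) : ℝ) - (p pq : ℝ)) = ((pos j : ℝ) - (pq : ℝ)) := by
      have h2 : ((p (pos j) - p pq : ℤ) : ℝ) = ((pos j - pq : ℤ) : ℝ) := by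
        exact_mod_cast congrArg (fun z : ℤ => (z : ℝ)) (hp (pos j) pq)
      push_cast at h2
      linarith
    rw [key, key, hdiff]
  have hw : ∀ j : Fin N, ropeAttnWeightZ d N θ q k (fun j' => p (pos j')) (p pq) D j =
      ropeAttnWeightZ d N θ q k pos pq D j := by
    intro j
    unfold ropeAttnWeightZ
    simp only [hscore]
  refine ⟨hw, ?_⟩
  unfold ropeAttnOutZ
  exact Finset.sum_congr rfl fun j _ => by rw [hw]
end

section
/- Let d, N, V be natural numbers, θ : Fin d → ℝ, and f the rotary position embedding (f(x, m))_t = exp(m·θ_t·I)·x_t for x : Fin d → ℂ. Let q : Fin d → ℂ, k : Fin N → (Fin d → ℂ), v : Fin N → (Fin V → ℝ), pos : Fin N → ℝ, pq : ℝ, D > 0, and let S be a nonempty finite subset of Fin N. For a shift c : ℝ, define attention over the selected keys by a(c)_j = exp(s(c)_j/√D)/∑_{j'∈S} exp(s(c)_{j'}/√D) for j ∈ S, where s(c)_j = ∑_t Re(conj((f(q, pq + c))_t)·(f(k_j, pos_j + c))_t), and out(c) = ∑_{j∈S} a(c)_j • v_j. Then a(c)_j = a(0)_j for all j ∈ S and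 out(c) = out(0) for every c : ℝ. (Corollary 3.3, selective-reuse form: under position-agnostic encoding, any selected subset of cache entries may be reused with position IDs shifted by a common offset without changing the attention weights or output.) -/
open Complex

/-- Softmax attention weight of key `j` over a selected subset `S` of cache entries,
under shift `c`, with scores scaled by `√D`. -/
noncomputable def ropeAttnWeightOn (d N : ℕ) (θ : Fin d → ℝ) (q : Fin d → ℂ)
    (k : Fin N → Fin d → ℂ) (pos : Fin N → ℝ) (pq : ℝ) (D : ℝ) (S : Finset (Fin N))
    (c : ℝ) (j : Fin N) : ℝ :=
  Real.exp (ropeScore d N θ q k pos pq c j / Real.sqrt D) /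
    ∑ j' ∈ S, Real.exp (ropeScore d N θ q k pos pq c j' / Real.sqrt D)

/-- Attention output over the selected subset `S` under shift `c`. -/
noncomputable def ropeAttnOutOn (d N V : ℕ) (θ : Fin d → ℝ) (q : Fin d → ℂ)
    (k : Fin N → Fin d → ℂ) (v : Fin N → Fin V → ℝ) (pos : Fin N → ℝ) (pq : ℝ)
    (D : ℝ) (S : Finset (Fin N)) (c : ℝ) : Fin V → ℝ :=
  ∑ j ∈ S, ropeAttnWeightOn d N θ q k pos pq D S c j • v j

/-- Corollary 3.3, selective-reuse form: under position-agnostic encoding, any selected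
subset of cache entries may be reused with position IDs shifted by a common offset `c`
without changing the attention weights or the attention output. -/
theorem rope_selective_reuse_shift_invariant (d N V : ℕ) (θ : Fin d → ℝ)
    (q : Fin d → ℂ) (k : Fin N → Fin d → ℂ) (v : Fin N → Fin V → ℝ)
    (pos : Fin N → ℝ) (pq : ℝ) (D : ℝ) (hD : 0 < D)
    (S : Finset (Fin N)) (hS : S.Nonempty) (c : ℝ) :
    (∀ j ∈ S, ropeAttnWeightOn d N θ q k pos pq D S c j =
        ropeAttnWeightOn d N θ q k pos pq D S 0 j) ∧
    ropeAttnOutOn d N V θ q k v pos pq D S c =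
      ropeAttnOutOn d N V θ q k v pos pq D S 0 := by
  have hs : ∀ j, ropeScore d N θ q k pos pq c j = ropeScore d N θ q k pos pq 0 j :=
    ropeScore_shift d N θ q k pos pq c
  have hw : ∀ j, ropeAttnWeightOn d N θ q k pos pq D S c j =
      ropeAttnWeightOn d N θ q k pos pq D S 0 j := by
    intro j; unfold ropeAttnWeightOn; simp only [hs]
  exact ⟨fun j _ => hw j, by unfold ropeAttnOutOn; simp only [hw]⟩
end
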